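/- For every λ ∈ ℂ with λ ≠ 1, every integer n ≥ 1, every a ∈ ℤ_{≥0}, and all x, the identity (1-λ)^{-an} · Σ_{l=0}^{an} C(an, l) · (-λ)^{an-l} · H_{n-1}^{(an)}(x+l|λ) = Σ_{l=0}^{n-1} Σ_{k=0}^{l} (C(l,k)/C(k+n, n)) · S₁(n-1, l) · S₂(k+n, n) · (x-1)^{l-k} holds as an identity of polynomials in x. -/

import Mathlib

/-!
Both sides equal `x ^ (n - 1)`.

On the left, `∑ C(α,l) (-λ)^(α-l) e^(lt) = (e^t - λ)^α` cancels the denominator in the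
generating function of `H^(α)`, leaving `(1 - λ)^α e^(xt)`.

On the right, the inner sum is `l! [t^l] A(t)` with `A(t) = ((e^t - 1)/t)^n e^((x-1)t)`. Since
`∑_m S₁(m,l) u^m/m! = log(1+u)^l / l!`, the outer sum is `m! [u^m] A(log(1+u))`, where
`n = m + 1` and `A(log(1+u)) = (1+u)^(x-1) (u / log(1+u))^n`. Its coefficient of `u^m` is
`x^m / m!` by the Lagrange-inversion identity `k! [u^k] (1+u)^c (u / log(1+u))^(k+1) = (c+1)^k`.
-/

/-- The formal power series `e^{ct} = ∑_{m≥0} c^m t^m / m!` over `ℂ`. -/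
noncomputable def expPS (c : ℂ) : PowerSeries ℂ :=
  PowerSeries.mk fun m => c ^ m / (m.factorial : ℂ)

open Finset PowerSeries
open scoped Nat

namespace PowerSeries

lemma coeff_X_mul_derivative {R : Type*} [CommSemiring R] (f : R⟦X⟧) (m : ℕ) :
    coeff m (X * d⁄dX R f) = m * coeff m f := by
  cases m with
  | zero => simp
  | succ k => rw [coeff_succ_X_mul, coeff_derivative]; push_cast; ring

noncomputable def divX {R : Type*} [Semiring R] (f : R⟦X⟧) : R⟦X⟧ :=
  mk fun m => coeff (m + 1) f

lemma X_mul_divX {R : Type*} [Semiring R] {f : R⟦X⟧} (hf : constantCoeff f = 0) :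
    X * divX f = f := by
  conv_rhs => rw [eq_X_mul_shift_add_const f, hf, map_zero, add_zero]
  rfl

lemma coeff_divX_pow {R : Type*} [CommSemiring R] {f : R⟦X⟧} (hf : constantCoeff f = 0)
    (n k : ℕ) : coeff k (divX f ^ n) = coeff (k + n) (f ^ n) := by
  conv_rhs => rw [← X_mul_divX hf, mul_pow, coeff_X_pow_mul]

section Log

variable {K : Type*} [Field K] [CharZero K]

lemma one_add_X_mul_derivative_log : (1 + X) * d⁄dX K (log K) = 1 := by
  ext (_ | m)
  · simp [deriv_log]
  · rw [add_mul, one_mul, map_add, coeff_succ_X_mul, deriv_log]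
    simp [coeff_one, pow_succ]

lemma log_ne_zero : log K ≠ 0 := fun h => by
  simpa using congrArg (coeff 1) h

lemma constantCoeff_divX_log : constantCoeff (divX (log K)) = 1 := by
  simp [divX, ← coeff_zero_eq_constantCoeff_apply]

lemma log_mul_divX_log_inv : log K * (divX (log K))⁻¹ = X := by
  nth_rewrite 1 [← X_mul_divX (constantCoeff_log (A := K))]
  rw [mul_assoc, PowerSeries.mul_inv_cancel _ (by simp [constantCoeff_divX_log]), mul_one]

lemma coeff_log_pow_of_lt {m l : ℕ} (h : m < l) : coeff m (log K ^ l) = 0 := by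
  rw [← X_mul_divX (constantCoeff_log (A := K)), mul_pow, coeff_X_pow_mul', if_neg (by omega)]

lemma coeff_subst_log (f : K⟦X⟧) (m : ℕ) :
    coeff m (f.subst (log K)) = ∑ l ∈ range (m + 1), coeff l f * coeff m (log K ^ l) := by
  rw [coeff_subst' HasSubst.log, finsum_eq_sum_of_support_subset (s := range (m + 1))]
  · simp [smul_eq_mul]
  · intro l hl
    simp only [Function.mem_support, coe_range, Set.mem_Iio] at hl ⊢
    by_contra h
    exact hl (by rw [coeff_log_pow_of_lt (by omega), smul_zero])

lemma one_add_X_mul_X_mul_derivative_divX_log_inv :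
    (1 + X) * (X * d⁄dX K (divX (log K))⁻¹) =
      (1 + X) * (divX (log K))⁻¹ - (divX (log K))⁻¹ ^ 2 := by
  set T := (divX (log K))⁻¹
  have h := congrArg (d⁄dX K) (log_mul_divX_log_inv (K := K))
  rw [Derivation.leibniz, derivative_X, smul_eq_mul, smul_eq_mul] at h
  linear_combination (1 + X) * T * h - (1 + X) * d⁄dX K T * log_mul_divX_log_inv (K := K)
    - T ^ 2 * one_add_X_mul_derivative_log (K := K)

end Log

end PowerSeries

lemma eq_of_forall_sum_mul_pow_eq {K : Type*} [Field K] [Infinite K] {N : ℕ} {a b : ℕ → K}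
    (h : ∀ c : K, ∑ j ∈ range N, a j * c ^ j = ∑ j ∈ range N, b j * c ^ j)
    {l : ℕ} (hl : l < N) : a l = b l := by
  have coeff_sum (f : ℕ → K) :
      (∑ j ∈ range N, Polynomial.C (f j) * Polynomial.X ^ j).coeff l = f l := by
    simp [Polynomial.finsetSum_coeff, hl]
  rw [← coeff_sum a, ← coeff_sum b]
  congr 1
  exact Polynomial.funext fun c => by simpa [Polynomial.eval_finsetSum] using h c

lemma expPS_eq_rescale_exp (c : ℂ) : expPS c = rescale c (exp ℂ) := by
  ext m
  simp [expPS, coeff_exp, div_eq_mul_inv]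

lemma expPS_add (a b : ℂ) : expPS (a + b) = expPS a * expPS b := by
  simp only [expPS_eq_rescale_exp, exp_mul_exp_eq_exp_add]

lemma expPS_one_pow (l : ℕ) : expPS 1 ^ l = expPS l := by
  rw [expPS_eq_rescale_exp, expPS_eq_rescale_exp, rescale_one, RingHom.id_apply,
    exp_pow_eq_rescale_exp]

lemma constantCoeff_expPS (c : ℂ) : constantCoeff (expPS c) = 1 := by
  simp [expPS]

lemma constantCoeff_expPS_one_sub_one : constantCoeff (expPS 1 - 1) = 0 := by
  simp [constantCoeff_expPS]

lemma derivative_expPS (c : ℂ) : d⁄dX ℂ (expPS c) = C c * expPS c := by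
  ext m
  simp only [expPS, coeff_derivative, coeff_mk, coeff_C_mul, Nat.factorial_succ]
  push_cast
  field_simp
  ring

lemma sum_choose_mul_shift_eq_of_genFun (lam : ℂ) (hlam : lam ≠ 1) (α : ℕ)
    (H : ℕ → ℂ → ℂ)
    (hH : ∀ y : ℂ,
      (expPS 1 - C lam) ^ α * mk (fun k => H k y / k !) = C (1 - lam) ^ α * expPS y)
    (m : ℕ) (x : ℂ) :
    ∑ l ∈ range (α + 1), (α.choose l : ℂ) * (-lam) ^ (α - l) * H m (x + l) =
      (1 - lam) ^ α * x ^ m := by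
  set f := expPS 1 - C lam
  have hf : f ≠ 0 := fun h => by
    have := congrArg constantCoeff h
    simp only [f, map_sub, constantCoeff_expPS, constantCoeff_C, map_zero, sub_eq_zero] at this
    exact hlam this.symm
  have hbinom :
      f ^ α = ∑ l ∈ range (α + 1), C ((α.choose l : ℂ) * (-lam) ^ (α - l)) * expPS l := by
    rw [show f = expPS 1 + C (-lam) by simp [f, sub_eq_add_neg], add_pow]
    refine sum_congr rfl fun l _ => ?_
    rw [expPS_one_pow, ← map_pow, ← map_natCast C, map_mul]
    ring
  have hseries : ∑ l ∈ range (α + 1),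
      C ((α.choose l : ℂ) * (-lam) ^ (α - l)) * mk (fun k => H k (x + l) / k !) =
        C ((1 - lam) ^ α) * expPS x := by
    refine mul_left_cancel₀ (pow_ne_zero α hf) ?_
    calc _ = ∑ l ∈ range (α + 1),
          C ((α.choose l : ℂ) * (-lam) ^ (α - l)) * (C (1 - lam) ^ α * expPS (x + l)) := by
          rw [mul_sum]
          exact sum_congr rfl fun l _ => by rw [mul_left_comm, hH]
      _ = _ := by
          rw [hbinom, sum_mul]
          exact sum_congr rfl fun l _ => by rw [expPS_add, map_pow]; ring
  have h := congrArg (coeff m) hseries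
  simp only [map_sum, coeff_C_mul, coeff_mk, expPS, ← mul_div_assoc, ← sum_div] at h
  rwa [div_left_inj' (Nat.cast_ne_zero.mpr (Nat.factorial_ne_zero m))] at h

/-- `(1 + X) ^ c`, realized as `exp (c log (1 + X))`. -/
noncomputable def binomPS (c : ℂ) : ℂ⟦X⟧ := (expPS c).subst (log ℂ)

lemma one_add_X_mul_derivative_binomPS (c : ℂ) :
    (1 + X) * d⁄dX ℂ (binomPS c) = C c * binomPS c := by
  rw [binomPS, derivative_subst HasSubst.log, derivative_expPS, subst_mul HasSubst.log,
    subst_C, mul_left_comm, one_add_X_mul_derivative_log, mul_one]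
  rfl

lemma factorial_mul_coeff_binomPS (c : ℂ) (m : ℕ) :
    m ! * coeff m (binomPS c) = ∏ i ∈ range m, (c - i) := by
  induction m with
  | zero => simp [binomPS, coeff_subst_log, expPS]
  | succ m ih =>
    have h := congrArg (coeff m) (one_add_X_mul_derivative_binomPS c)
    rw [add_mul, one_mul, map_add, coeff_X_mul_derivative, coeff_derivative, coeff_C_mul] at h
    rw [prod_range_succ, ← ih, Nat.factorial_succ]
    push_cast
    linear_combination (m ! : ℂ) * h

lemma binomPS_one : binomPS 1 = 1 + X := by
  ext m
  have h := factorial_mul_coeff_binomPS 1 m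
  rcases m with _ | _ | m
  · simpa using h
  · simpa using h
  · rw [prod_eq_zero (i := 1) (by simp) (by simp)] at h
    simpa [coeff_X, coeff_one, Nat.factorial_ne_zero] using h

lemma binomPS_add_one (c : ℂ) : binomPS (c + 1) = (1 + X) * binomPS c := by
  rw [binomPS, add_comm, expPS_add, subst_mul HasSubst.log, ← binomPS, binomPS_one, ← binomPS]

lemma derivative_binomPS_add_one (c : ℂ) :
    d⁄dX ℂ (binomPS (c + 1)) = C (c + 1) * binomPS c := by
  have h : (1 + X) * d⁄dX ℂ (binomPS (c + 1)) = (1 + X) * (C (c + 1) * binomPS c) := by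
    rw [one_add_X_mul_derivative_binomPS, binomPS_add_one]
    ring
  refine mul_left_cancel₀ (fun h0 => ?_) h
  simpa using congrArg constantCoeff h0

local notation "Θ" => (divX (log ℂ))⁻¹

/-- The residue of `d/du ((1+u)^(c+1) / log(1+u)^(k+1))` vanishes: for
`P = (1+u)^(c+1) Θ^(k+1)`, the coefficients of `u^(k+1)` in `X * P'` and `(k+1) P` agree. -/
lemma succ_mul_coeff_binomPS_mul_pow (c : ℂ) (k : ℕ) :
    (k + 1) * coeff (k + 1) (binomPS c * Θ ^ (k + 2)) =
      (c + 1) * coeff k (binomPS c * Θ ^ (k + 1)) := by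
  have hP : X * d⁄dX ℂ (binomPS (c + 1) * Θ ^ (k + 1)) =
      C (c + 1) * (X * (binomPS c * Θ ^ (k + 1))) +
        C ((k : ℂ) + 1) * (binomPS (c + 1) * Θ ^ (k + 1)) -
        C ((k : ℂ) + 1) * (binomPS c * Θ ^ (k + 2)) := by
    rw [Derivation.leibniz, derivative_pow, derivative_binomPS_add_one, smul_eq_mul, smul_eq_mul,
      add_tsub_cancel_right, ← map_natCast C (k + 1), Nat.cast_succ, binomPS_add_one]
    linear_combination C ((k : ℂ) + 1) * binomPS c * Θ ^ k *
      one_add_X_mul_X_mul_derivative_divX_log_inv (K := ℂ)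
  have h := congrArg (coeff (k + 1)) hP
  rw [coeff_X_mul_derivative] at h
  simp only [map_sub, map_add, add_mul, coeff_C_mul, one_mul, map_one, coeff_succ_X_mul] at h
  push_cast at h
  linear_combination h

lemma factorial_mul_coeff_binomPS_mul_pow (c : ℂ) (k : ℕ) :
    k ! * coeff k (binomPS c * Θ ^ (k + 1)) = (c + 1) ^ k := by
  induction k with
  | zero =>
    have h := factorial_mul_coeff_binomPS c 0
    simp_all [constantCoeff_divX_log]
  | succ k ih =>
    rw [Nat.factorial_succ]
    push_cast
    linear_combination (k ! : ℂ) * succ_mul_coeff_binomPS_mul_pow c k + (c + 1) * ih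

/-- The generating function `∑_m S₁(m,l) u^m / m! = log(1+u)^l / l!`, read off from
`(1+u)^c = ∑_l c^l log(1+u)^l / l!` by comparing coefficients of `c^l`. -/
lemma mul_factorial_eq_factorial_mul_coeff_log_pow {m : ℕ} (s : ℕ → ℂ)
    (hs : ∀ c : ℂ, ∏ i ∈ range m, (c - i) = ∑ j ∈ range (m + 1), s j * c ^ j)
    {l : ℕ} (hl : l ≤ m) : s l * l ! = m ! * coeff m (log ℂ ^ l) := by
  have h := eq_of_forall_sum_mul_pow_eq (N := m + 1) (a := s) (l := l)
    (b := fun j => m ! / j ! * coeff m (log ℂ ^ j)) (fun c => ?_) (by omega)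
  · rw [h]
    have := Nat.cast_ne_zero (R := ℂ).mpr (Nat.factorial_ne_zero l)
    field_simp
  · rw [← hs, ← factorial_mul_coeff_binomPS, binomPS, coeff_subst_log, mul_sum]
    refine sum_congr rfl fun j _ => ?_
    simp only [expPS, coeff_mk]
    ring

lemma subst_log_divX_expPS_one_sub_one : (divX (expPS 1 - 1)).subst (log ℂ) = Θ := by
  refine mul_left_cancel₀ log_ne_zero ?_
  have h1 : subst (log ℂ) (1 : ℂ⟦X⟧) = (1 : ℂ⟦X⟧) := by
    rw [← coe_substAlgHom HasSubst.log, map_one]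
  calc log ℂ * (divX (expPS 1 - 1)).subst (log ℂ)
      = (X * divX (expPS 1 - 1)).subst (log ℂ) := by
        rw [subst_mul HasSubst.log, subst_X HasSubst.log]
    _ = X := by
        rw [X_mul_divX constantCoeff_expPS_one_sub_one, subst_sub HasSubst.log, ← binomPS,
          binomPS_one, h1, add_sub_cancel_left]
    _ = log ℂ * Θ := log_mul_divX_log_inv.symm

lemma sum_stirling_mul_eq_pow (m : ℕ) (s₁ : ℕ → ℂ)
    (hs₁ : ∀ c : ℂ, ∏ i ∈ range m, (c - i) = ∑ j ∈ range (m + 1), s₁ j * c ^ j)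
    (s₂ : ℕ → ℂ)
    (hs₂ : (expPS 1 - 1) ^ (m + 1) = C ((m + 1) ! : ℂ) * mk (fun l => s₂ l / l !)) (x : ℂ) :
    ∑ l ∈ range (m + 1), ∑ k ∈ range (l + 1),
        ((l.choose k : ℂ) / ((k + (m + 1)).choose (m + 1) : ℂ)) * s₁ l * s₂ (k + (m + 1)) *
          (x - 1) ^ (l - k) = x ^ m := by
  set A := divX (expPS 1 - 1) ^ (m + 1) * expPS (x - 1)
  have hinner (l : ℕ) : ∑ k ∈ range (l + 1),
      ((l.choose k : ℂ) / ((k + (m + 1)).choose (m + 1) : ℂ)) * s₁ l * s₂ (k + (m + 1)) *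
        (x - 1) ^ (l - k) = s₁ l * l ! * coeff l A := by
    rw [coeff_mul, Nat.sum_antidiagonal_eq_sum_range_succ_mk, mul_sum]
    refine sum_congr rfl fun k hk => ?_
    have hkl : k ≤ l := Nat.lt_succ_iff.mp (mem_range.mp hk)
    rw [coeff_divX_pow constantCoeff_expPS_one_sub_one, hs₂,
      coeff_C_mul, coeff_mk, expPS, coeff_mk, Nat.cast_choose ℂ hkl,
      Nat.cast_choose ℂ (le_add_self), Nat.add_sub_cancel]
    have := Nat.cast_ne_zero (R := ℂ).mpr (Nat.factorial_ne_zero k)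
    field_simp
  have hsubst : A.subst (log ℂ) = binomPS (x - 1) * Θ ^ (m + 1) := by
    rw [subst_mul HasSubst.log, subst_pow HasSubst.log, subst_log_divX_expPS_one_sub_one,
      ← binomPS, mul_comm]
  calc _ = ∑ l ∈ range (m + 1), m ! * coeff m (log ℂ ^ l) * coeff l A := by
        refine sum_congr rfl fun l hl => ?_
        rw [hinner, mul_factorial_eq_factorial_mul_coeff_log_pow s₁ hs₁
          (Nat.lt_succ_iff.mp (mem_range.mp hl))]
    _ = m ! * coeff m (A.subst (log ℂ)) := by
        rw [coeff_subst_log, mul_sum]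
        exact sum_congr rfl fun l _ => by ring
    _ = x ^ m := by
        rw [hsubst, factorial_mul_coeff_binomPS_mul_pow, sub_add_cancel]

/-- For `λ ≠ 1`, `n ≥ 1`, `a ∈ ℤ_{≥0}` and all `x`,
`(1-λ)^{-an} ∑_{l=0}^{an} C(an,l) (-λ)^{an-l} H_{n-1}^{(an)}(x+l|λ)
  = ∑_{l=0}^{n-1} ∑_{k=0}^{l} (C(l,k)/C(k+n,n)) S₁(n-1,l) S₂(k+n,n) (x-1)^{l-k}`.
Here `H_m^{(α)}(x|λ)` is characterized by
`((1-λ)/(e^t-λ))^α e^{xt} = ∑_m H_m^{(α)}(x|λ) t^m/m!`, the Stirling numbers of the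
second kind `S₂(l,m)` by `(e^t-1)^m = m! ∑_l S₂(l,m) t^l/l!`, and the Stirling numbers
of the first kind `S₁(m,l)` by `x(x-1)⋯(x-m+1) = ∑_{l=0}^m S₁(m,l) x^l`. -/
theorem stmt4 (lam : ℂ) (hlam : lam ≠ 1) (n : ℕ) (hn : 1 ≤ n) (a : ℕ)
    (H : ℕ → ℕ → ℂ → ℂ)
    (hH : ∀ (α : ℕ) (x : ℂ),
      (expPS 1 - PowerSeries.C lam) ^ α *
          PowerSeries.mk (fun m => H α m x / (m.factorial : ℂ)) =
        PowerSeries.C (1 - lam) ^ α * expPS x)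
    (S1 : ℕ → ℕ → ℂ)
    (hS1 : ∀ (m : ℕ) (x : ℂ),
      ∏ i ∈ Finset.range m, (x - i) = ∑ j ∈ Finset.range (m + 1), S1 m j * x ^ j)
    (S2 : ℕ → ℕ → ℂ)
    (hS2 : ∀ m : ℕ,
      (expPS 1 - 1) ^ m =
        PowerSeries.C (m.factorial : ℂ) *
          PowerSeries.mk (fun l => S2 l m / (l.factorial : ℂ))) :
    ∀ x : ℂ,
      ((1 - lam) ^ (a * n))⁻¹ *
          ∑ l ∈ Finset.range (a * n + 1),
            ((a * n).choose l : ℂ) * (-lam) ^ (a * n - l) * H (a * n) (n - 1) (x + l) =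
        ∑ l ∈ Finset.range n, ∑ k ∈ Finset.range (l + 1),
          ((l.choose k : ℂ) / ((k + n).choose n : ℂ)) * S1 (n - 1) l * S2 (k + n) n *
            (x - 1) ^ (l - k) := by
  intro x
  obtain ⟨m, rfl⟩ : ∃ m, n = m + 1 := ⟨n - 1, by omega⟩
  rw [sum_choose_mul_shift_eq_of_genFun lam hlam _ (H _) (hH _), Nat.add_sub_cancel,
    sum_stirling_mul_eq_pow m (S1 m) (hS1 m) (fun l => S2 l (m + 1)) (hS2 (m + 1)),
    inv_mul_cancel_left₀ (pow_ne_zero _ (sub_ne_zero.mpr hlam.symm))]
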